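/- For every n ≥ 1, the independence number of the n-th strong power of the symplectic graph Sp(2m,𝔽₂) equals (2m+1)^n. -/

import Mathlib

open Finset

/-- The canonical symplectic form `σ(u,v) = uᵀ [[0, Iₘ], [-Iₘ, 0]] v` on `𝔽₂^{2m}`,
with vectors written as pairs in `(𝔽₂^m) × (𝔽₂^m)`. -/
def sympForm (m : ℕ) (u v : (Fin m → ZMod 2) × (Fin m → ZMod 2)) : ZMod 2 :=
  (∑ i, u.1 i * v.2 i) - ∑ i, u.2 i * v.1 i

/-- The symplectic graph `Sp(2m, 𝔽₂)`: vertices are the nonzero vectors of `𝔽₂^{2m}`,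
with distinct vertices adjacent iff the symplectic form vanishes on them. -/
def sympGraph (m : ℕ) :
    SimpleGraph {v : (Fin m → ZMod 2) × (Fin m → ZMod 2) // v ≠ 0} where
  Adj u v := u ≠ v ∧ sympForm m u.1 v.1 = 0
  symm := by
    constructor
    rintro u v ⟨h, hs⟩
    refine ⟨h.symm, ?_⟩
    have h1 : ∀ f g : Fin m → ZMod 2, ∑ i, f i * g i = ∑ i, g i * f i :=
      fun f g => Finset.sum_congr rfl fun i _ => mul_comm _ _
    unfold sympForm at hs ⊢
    rw [h1 v.1.1 u.1.2, h1 v.1.2 u.1.1]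
    linear_combination -hs
  loopless := ⟨fun u h => h.1 rfl⟩

/-- The independence number of a finite simple graph. -/
noncomputable def SimpleGraph.indepNum' {V : Type*} [Fintype V] (G : SimpleGraph V) : ℕ :=
  sSup {n | ∃ s : Finset V, ((s : Set V).Pairwise fun u v => ¬ G.Adj u v) ∧ s.card = n}

/-- The `n`-fold strong power of a simple graph. -/
def SimpleGraph.strongPow {V : Type*} (G : SimpleGraph V) (n : ℕ) :
    SimpleGraph (Fin n → V) where
  Adj x y := x ≠ y ∧ ∀ i, x i = y i ∨ G.Adj (x i) (y i)
  symm := ⟨fun _ _ ⟨h, ha⟩ => ⟨h.symm, fun i => (ha i).imp Eq.symm SimpleGraph.Adj.symm⟩⟩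
  loopless := ⟨fun _ h => h.1 rfl⟩

/-! Haemers' rank bound gives the upper bound. Over `𝔽₂` the matrix `M u v = 1 + σ(u, v)` is `1` on
the diagonal and `0` on distinct non-adjacent vertices, and it factors through `𝔽₂^{2m+1}`. Its
`n`-th tensor power therefore restricts to the identity matrix on any independent set of the strong
power, while having rank at most `(2m+1)^n`. For the lower bound, `2m+1` nonzero vectors that pair
to `1` under `σ` form an independent set of `Sp(2m, 𝔽₂)`, and its `n`-th cartesian power is
independent in the strong power. -/

namespace Matrix

variable {α β γ R : Type*}

def tensorPow [CommMonoid R] (A : Matrix α β R) (n : ℕ) : Matrix (Fin n → α) (Fin n → β) R :=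
  of fun x y => ∏ i, A (x i) (y i)

theorem tensorPow_mul [Fintype β] [CommSemiring R] (A : Matrix α β R) (B : Matrix β γ R)
    (n : ℕ) : A.tensorPow n * B.tensorPow n = (A * B).tensorPow n := by
  ext x z
  simp only [tensorPow, mul_apply, of_apply, Finset.prod_univ_sum, Fintype.piFinset_univ,
    Finset.prod_mul_distrib]

theorem card_le_card_of_mul_eq_diagonal {S ι K : Type*} [Fintype S] [DecidableEq S] [Fintype ι]
    [Field K] {C : Matrix S ι K} {B : Matrix ι S K} {d : S → K} (hd : ∀ s, d s ≠ 0)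
    (h : C * B = diagonal d) : Fintype.card S ≤ Fintype.card ι :=
  calc Fintype.card S = (C * B).rank := by
        rw [h, rank_of_isUnit _ (isUnit_diagonal.2 (Pi.isUnit_iff.2 fun s => (hd s).isUnit))]
    _ ≤ C.rank := rank_mul_le_left C B
    _ ≤ Fintype.card ι := rank_le_card_width C

end Matrix

namespace SimpleGraph

variable {V : Type*} {G : SimpleGraph V}

theorem indepNum'_eq_indepNum [Fintype V] : G.indepNum' = G.indepNum := by
  simp only [indepNum', indepNum, isNIndepSet_iff]

theorem IsIndepSet.piFinset_strongPow {s : Finset V} (hs : G.IsIndepSet s) (n : ℕ) :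
    (G.strongPow n).IsIndepSet (Fintype.piFinset fun _ : Fin n => s) := by
  intro x hx y hy hxy ⟨_, hadj⟩
  obtain ⟨i, hi⟩ := Function.ne_iff.1 hxy
  simp only [mem_coe, Fintype.mem_piFinset] at hx hy
  exact (hadj i).elim hi (hs (hx i) (hy i) hi)

/-- Haemers' rank bound, with the fitting matrix of `G` given by a rank factorization `C * B`. -/
theorem IsIndepSet.card_le_pow_strongPow {ι K : Type*} [Fintype ι] [Field K]
    (C : Matrix V ι K) (B : Matrix ι V K) (hdiag : ∀ v, (C * B) v v ≠ 0)
    (hoff : ∀ u v, u ≠ v → ¬ G.Adj u v → (C * B) u v = 0) {n : ℕ} {S : Finset (Fin n → V)}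
    (hS : (G.strongPow n).IsIndepSet S) : #S ≤ Fintype.card ι ^ n := by
  classical
  have hprod : ∀ x y, ((C * B).tensorPow n) x y = ∏ i, (C * B) (x i) (y i) := fun _ _ => rfl
  have hdiagonal : ((C * B).tensorPow n).submatrix ((↑) : S → _) (↑) =
      Matrix.diagonal fun x => ∏ i, (C * B) (x.1 i) (x.1 i) := by
    ext x y
    rcases eq_or_ne x y with rfl | hxy
    · simp [hprod]
    · have hxy' : x.1 ≠ y.1 := Subtype.coe_injective.ne hxy
      obtain ⟨i, hne, hnadj⟩ : ∃ i, x.1 i ≠ y.1 i ∧ ¬ G.Adj (x.1 i) (y.1 i) := by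
        by_contra! h
        exact hS x.2 y.2 hxy' ⟨hxy', fun i => or_iff_not_imp_left.2 (h i)⟩
      rw [Matrix.submatrix_apply, hprod, Matrix.diagonal_apply_ne _ hxy]
      exact Finset.prod_eq_zero (Finset.mem_univ i) (hoff _ _ hne hnadj)
  rw [← Matrix.tensorPow_mul, Matrix.submatrix_mul _ _ _ id _ Function.bijective_id] at hdiagonal
  simpa using Matrix.card_le_card_of_mul_eq_diagonal
    (fun x => Finset.prod_ne_zero_iff.2 fun i _ => hdiag (x.1 i)) hdiagonal

end SimpleGraph

abbrev SympSpace (m : ℕ) := (Fin m → ZMod 2) × (Fin m → ZMod 2)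

section SympSpace

variable {m : ℕ}

theorem sympForm_self (u : SympSpace m) : sympForm m u u = 0 := by
  rw [sympForm, sub_eq_zero]
  exact Finset.sum_congr rfl fun i _ => mul_comm _ _

theorem sympForm_comm (u v : SympSpace m) : sympForm m v u = sympForm m u v := by
  rw [← ZMod.neg_eq_self_mod_two (sympForm m u v), sympForm, sympForm, neg_sub]
  congr 1 <;> exact Finset.sum_congr rfl fun i _ => mul_comm _ _

theorem sympForm_zero_left (v : SympSpace m) : sympForm m 0 v = 0 := by
  simp [sympForm]

def sympFormLeft (m : ℕ) : Matrix (SympSpace m) (Option (Fin m ⊕ Fin m)) (ZMod 2) :=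
  Matrix.of fun u a => a.elim 1 (Sum.elim u.1 u.2)

def sympFormRight (m : ℕ) : Matrix (Option (Fin m ⊕ Fin m)) (SympSpace m) (ZMod 2) :=
  Matrix.of fun a v => a.elim 1 (Sum.elim v.2 v.1)

theorem sympFormLeft_mul_sympFormRight (u v : SympSpace m) :
    (sympFormLeft m * sympFormRight m) u v = 1 + sympForm m u v := by
  simp only [Matrix.mul_apply, sympFormLeft, sympFormRight, Matrix.of_apply,
    Fintype.sum_option, Fintype.sum_sum_type, Option.elim, Sum.elim_inl, Sum.elim_inr, sympForm,
    sub_eq_add_neg, ZMod.neg_eq_self_mod_two, mul_one]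

/-- In symplectic pairs `(u.1 i, u.2 i)`, vector `k` is `⌊k/2⌋` copies of `(1,0)`, then
`(k mod 2, 1)`, then zeros; any two of them pair to `1`. -/
def nonorthVec (m : ℕ) (k : Fin (2 * m + 1)) : SympSpace m :=
  (fun i => if 2 * (i : ℕ) < k then 1 else 0, fun i => if (k : ℕ) / 2 = i then 1 else 0)

theorem sympForm_nonorthVec_of_lt {k l : Fin (2 * m + 1)} (hkl : k < l) :
    sympForm m (nonorthVec m k) (nonorthVec m l) = 1 := by
  have hkl : (k : ℕ) < l := hkl
  have hk : (k : ℕ) / 2 < m := by omega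
  have hfirst : ∑ i, (nonorthVec m k).1 i * (nonorthVec m l).2 i = 0 :=
    Finset.sum_eq_zero fun i _ => by
      simp only [nonorthVec]
      split_ifs with hik hli
      · omega
      all_goals simp
  have hsecond : ∑ i, (nonorthVec m k).2 i * (nonorthVec m l).1 i = 1 := by
    rw [Finset.sum_eq_single_of_mem ⟨_, hk⟩ (Finset.mem_univ _)]
    · simp [nonorthVec, show 2 * ((k : ℕ) / 2) < l by omega]
    · intro i _ hi
      simp only [nonorthVec]
      rw [if_neg (fun h => hi (Fin.ext h.symm)), zero_mul]
  rw [sympForm, hfirst, hsecond]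
  decide

theorem sympForm_nonorthVec {k l : Fin (2 * m + 1)} (hkl : k ≠ l) :
    sympForm m (nonorthVec m k) (nonorthVec m l) = 1 := by
  rcases hkl.lt_or_gt with h | h
  · exact sympForm_nonorthVec_of_lt h
  · rw [sympForm_comm]
    exact sympForm_nonorthVec_of_lt h

end SympSpace

namespace sympGraph

variable {m : ℕ}

theorem exists_isIndepSet_card (hm : 1 ≤ m) :
    ∃ s : Finset {v : SympSpace m // v ≠ 0}, (sympGraph m).IsIndepSet s ∧ #s = 2 * m + 1 := by
  have hne_zero : ∀ k, nonorthVec m k ≠ 0 := by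
    have : Nontrivial (Fin (2 * m + 1)) := Fin.nontrivial_iff_two_le.2 (by omega)
    intro k hk
    obtain ⟨l, hlk⟩ := exists_ne k
    simpa [hk, sympForm_zero_left] using sympForm_nonorthVec hlk.symm
  have hinj : Function.Injective (nonorthVec m) := by
    intro k l hkl
    by_contra hne
    simpa [hkl, sympForm_self] using sympForm_nonorthVec hne
  let e : Fin (2 * m + 1) ↪ {v : SympSpace m // v ≠ 0} :=
    ⟨fun k => ⟨nonorthVec m k, hne_zero k⟩, fun k l h => hinj (congrArg Subtype.val h)⟩
  refine ⟨univ.map e, ?_, by simp⟩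
  simp only [coe_map, coe_univ, Set.image_univ]
  rintro _ ⟨k, rfl⟩ _ ⟨l, rfl⟩ hne ⟨-, hσ⟩
  exact one_ne_zero ((sympForm_nonorthVec fun h => hne (congrArg e h)).symm.trans hσ)

theorem card_le_of_isIndepSet_strongPow {n : ℕ} {S : Finset (Fin n → {v : SympSpace m // v ≠ 0})}
    (hS : ((sympGraph m).strongPow n).IsIndepSet S) : #S ≤ (2 * m + 1) ^ n := by
  have hcard : Fintype.card (Option (Fin m ⊕ Fin m)) = 2 * m + 1 := by
    simp only [Fintype.card_option, Fintype.card_sum, Fintype.card_fin]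
    omega
  rw [← hcard]
  refine hS.card_le_pow_strongPow (Matrix.of fun u => sympFormLeft m u.1)
    (Matrix.of fun a v => sympFormRight m a v.1) (fun v => ?_) (fun u v huv hnadj => ?_)
  · change (sympFormLeft m * sympFormRight m) v.1 v.1 ≠ 0
    simp [sympFormLeft_mul_sympFormRight, sympForm_self]
  · change (sympFormLeft m * sympFormRight m) u.1 v.1 = 0
    have hσ : sympForm m u.1 v.1 ≠ 0 := fun h => hnadj ⟨huv, h⟩
    rw [sympFormLeft_mul_sympFormRight]
    generalize sympForm m u.1 v.1 = a at hσ ⊢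
    revert a
    decide

end sympGraph

theorem indepNum_strongPow_sympGraph_general (m n : ℕ) (hm : 1 ≤ m) :
    ((sympGraph m).strongPow n).indepNum' = (2 * m + 1) ^ n := by
  rw [SimpleGraph.indepNum'_eq_indepNum]
  apply le_antisymm
  · obtain ⟨S, hS⟩ := SimpleGraph.exists_isNIndepSet_indepNum (G := (sympGraph m).strongPow n)
    exact hS.card_eq ▸ sympGraph.card_le_of_isIndepSet_strongPow hS.isIndepSet
  · obtain ⟨s, hs, hcard⟩ := sympGraph.exists_isIndepSet_card hm
    simpa [hcard] using (hs.piFinset_strongPow n).card_le_indepNum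

/-- For every `n ≥ 1`, the independence number of the `n`-th strong power of
`Sp(2m, 𝔽₂)` equals `(2m+1)^n`. -/
theorem indepNum_strongPow_sympGraph (m n : ℕ) (hm : 1 ≤ m) (hn : 1 ≤ n) :
    ((sympGraph m).strongPow n).indepNum' = (2 * m + 1) ^ n :=
  indepNum_strongPow_sympGraph_general m n hm
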